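/- arXiv:2403.19239 — 4 statements merged into one kernel-verified Lean document; each statement's English description precedes it below -/
import Mathlib

section
/- For any real-valued random variable Y and any p ∈ [1,2] with E[|Y|^p] < ∞, one has |E[e^{iY} - iY - 1]| ≤ 2^{3-2p} E[|Y|^p]. -/
/-!
Pointwise, `‖e^{ix} - ix - 1‖` is at most `x²/2` (integrate `‖e^{it} - 1‖ ≤ |t|`) and at most
`2|x|`. Interpolating, `min a b ≤ a^(p-1) b^(2-p)`, turns these two bounds into
`2^(3-2p) |x|^p` for `p ∈ [1, 2]`; integrating this pointwise bound gives the theorem.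
-/

open MeasureTheory Complex ComplexConjugate

lemma Real.min_le_rpow_mul_rpow {a b θ : ℝ} (ha : 0 ≤ a) (hb : 0 ≤ b) (hθ₀ : 0 ≤ θ)
    (hθ₁ : θ ≤ 1) : min a b ≤ a ^ θ * b ^ (1 - θ) :=
  calc min a b = min a b ^ θ * min a b ^ (1 - θ) := by
        rw [← Real.rpow_add' (le_min ha hb) (by norm_num), add_sub_cancel, Real.rpow_one]
    _ ≤ a ^ θ * b ^ (1 - θ) := by
        have hm := le_min ha hb
        gcongr
        exacts [min_le_left a b, min_le_right a b]

lemma hasDerivAt_exp_I_mul_ofReal_sub_I_mul_sub_one (t : ℝ) :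
    HasDerivAt (fun t : ℝ ↦ exp (I * t) - I * t - 1) (I * (exp (I * t) - 1)) t := by
  have hI : HasDerivAt (fun t : ℝ ↦ I * t) I t := by
    simpa using (hasDerivAt_id t).ofReal_comp.const_mul I
  exact ((hI.cexp.sub hI).sub_const 1).congr_deriv (by ring)

lemma norm_exp_I_mul_ofReal_sub_I_mul_sub_one_le_sq_div_two_of_nonneg {x : ℝ} (hx : 0 ≤ x) :
    ‖exp (I * x) - I * x - 1‖ ≤ x ^ 2 / 2 := by
  refine image_norm_le_of_norm_deriv_right_le_deriv_boundary (a := 0) (b := x)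
    (B := fun t ↦ t ^ 2 / 2) (B' := id) ?_
    (fun t _ ↦ (hasDerivAt_exp_I_mul_ofReal_sub_I_mul_sub_one t).hasDerivWithinAt) (by simp)
    (fun t ↦ by simpa using (hasDerivAt_pow 2 t).div_const 2) ?_ ⟨hx, le_rfl⟩
  · fun_prop
  · intro t ht
    simpa [abs_of_nonneg ht.1] using Real.norm_exp_I_mul_ofReal_sub_one_le (x := t)

lemma norm_exp_I_mul_ofReal_sub_I_mul_sub_one_le_sq_div_two (x : ℝ) :
    ‖exp (I * x) - I * x - 1‖ ≤ x ^ 2 / 2 := by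
  rcases le_total 0 x with hx | hx
  · exact norm_exp_I_mul_ofReal_sub_I_mul_sub_one_le_sq_div_two_of_nonneg hx
  · have hconj : exp (I * ↑(-x)) - I * ↑(-x) - 1 = conj (exp (I * x) - I * x - 1) := by
      simp [← exp_conj]
    have h := norm_exp_I_mul_ofReal_sub_I_mul_sub_one_le_sq_div_two_of_nonneg (neg_nonneg.mpr hx)
    rwa [hconj, Complex.norm_conj, neg_sq] at h

lemma norm_exp_I_mul_ofReal_sub_I_mul_sub_one_le_two_mul (x : ℝ) :
    ‖exp (I * x) - I * x - 1‖ ≤ 2 * |x| :=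
  calc ‖exp (I * x) - I * x - 1‖ = ‖(exp (I * x) - 1) - I * x‖ := by rw [sub_right_comm]
    _ ≤ ‖exp (I * x) - 1‖ + ‖I * (x : ℂ)‖ := norm_sub_le _ _
    _ ≤ |x| + |x| := by
        gcongr
        · exact Real.norm_exp_I_mul_ofReal_sub_one_le
        · simp
    _ = 2 * |x| := by ring

lemma norm_exp_I_mul_ofReal_sub_I_mul_sub_one_le_rpow {p : ℝ} (hp₁ : 1 ≤ p) (hp₂ : p ≤ 2)
    (x : ℝ) : ‖exp (I * x) - I * x - 1‖ ≤ 2 ^ (3 - 2 * p) * |x| ^ p :=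
  calc ‖exp (I * x) - I * x - 1‖ ≤ min (|x| ^ 2 / 2) (2 * |x|) := by
        rw [sq_abs]
        exact le_min (norm_exp_I_mul_ofReal_sub_I_mul_sub_one_le_sq_div_two x)
          (norm_exp_I_mul_ofReal_sub_I_mul_sub_one_le_two_mul x)
    _ ≤ (|x| ^ 2 / 2) ^ (p - 1) * (2 * |x|) ^ (1 - (p - 1)) :=
        Real.min_le_rpow_mul_rpow (by positivity) (by positivity) (by linarith) (by linarith)
    _ = 2 ^ (3 - 2 * p) * |x| ^ p := by
        have h2 : (2 : ℝ) ^ (3 - 2 * p) = 2 ^ (1 - (p - 1)) / 2 ^ (p - 1) := by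
          rw [← Real.rpow_sub two_pos]; ring_nf
        have hx : |x| ^ p = (|x| ^ 2) ^ (p - 1) * |x| ^ (1 - (p - 1)) := by
          rw [← Real.rpow_natCast, ← Real.rpow_mul (abs_nonneg x),
            ← Real.rpow_add' (abs_nonneg x) (by push_cast; linarith)]
          ring_nf
        rw [h2, hx, Real.div_rpow (by positivity) zero_le_two,
          Real.mul_rpow zero_le_two (abs_nonneg x)]
        ring

theorem stmt0_general {Ω : Type*} [MeasurableSpace Ω] (μ : Measure Ω)
    (Y : Ω → ℝ) (p : ℝ) (hp1 : 1 ≤ p) (hp2 : p ≤ 2)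
    (hint : Integrable (fun ω => |Y ω| ^ p) μ) :
    ‖∫ ω, (Complex.exp (Complex.I * (Y ω : ℂ)) - Complex.I * (Y ω : ℂ) - 1) ∂μ‖
      ≤ (2 : ℝ) ^ (3 - 2 * p) * ∫ ω, |Y ω| ^ p ∂μ := by
  rw [← integral_const_mul]
  exact norm_integral_le_of_norm_le (hint.const_mul _)
    (.of_forall fun ω ↦ norm_exp_I_mul_ofReal_sub_I_mul_sub_one_le_rpow hp1 hp2 (Y ω))

theorem stmt0 {Ω : Type*} [MeasurableSpace Ω] (μ : Measure Ω) [IsProbabilityMeasure μ]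
    (Y : Ω → ℝ) (hY : Measurable Y) (p : ℝ) (hp1 : 1 ≤ p) (hp2 : p ≤ 2)
    (hint : Integrable (fun ω => |Y ω| ^ p) μ) :
    ‖∫ ω, (Complex.exp (Complex.I * (Y ω : ℂ)) - Complex.I * (Y ω : ℂ) - 1) ∂μ‖
      ≤ (2 : ℝ) ^ (3 - 2 * p) * ∫ ω, |Y ω| ^ p ∂μ :=
  stmt0_general μ Y p hp1 hp2 hint
end

section
/- For every β ∈ (0,1) and every complex number z with Re z ≥ 0, one has z^β = (β/Γ(1-β)) ∫_0^∞ (1 - e^{-zr}) r^{-(1+β)} dr, where z^β denotes the principal branch of the power function. -/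
open MeasureTheory Set

open Filter Topology

/-!
For `0 < re z` the boundary terms of an integration by parts vanish, because
`‖1 - exp (-z r)‖ ≤ 2 min (‖z‖ r) 1`, and what remains is `(z / β) ∫ r ^ (-β) exp (-z r) dr`.
This Laplace integral equals `Γ(1 - β) z ^ (β - 1)`: for real `z` by scaling, and then on the
whole right half-plane by the identity theorem, both sides being holomorphic there. The same
bound on `‖1 - exp (-z r)‖` dominates the integrand locally uniformly on `0 ≤ re z`, so both
sides of the formula are continuous on the closed half-plane, the closure of the open one.
-/

lemma integrableOn_min_mul_rpow_Ioi {c β : ℝ} (hc : 0 ≤ c) (hβ0 : 0 < β) (hβ1 : β < 1) :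
    IntegrableOn (fun r : ℝ => min (c * r) 1 * r ^ (-(1 + β))) (Ioi 0) := by
  have hmeas : AEStronglyMeasurable (fun r : ℝ => min (c * r) 1 * r ^ (-(1 + β))) :=
    (by fun_prop : Measurable _).aestronglyMeasurable
  rw [← Ioc_union_Ioi_eq_Ioi zero_le_one]
  refine IntegrableOn.union ?_ ?_
  · refine ((intervalIntegral.intervalIntegrable_rpow' (by linarith : -1 < -β)).1.const_mul c)
      |>.mono' hmeas.restrict ?_
    filter_upwards [ae_restrict_mem measurableSet_Ioc] with r ⟨hr, _⟩
    rw [Real.norm_of_nonneg (by positivity), show -β = 1 + -(1 + β) by ring,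
      Real.rpow_add hr, Real.rpow_one, ← mul_assoc]
    gcongr
    exact min_le_left _ _
  · refine (integrableOn_Ioi_rpow_of_lt (by linarith : -(1 + β) < -1) one_pos).mono'
      hmeas.restrict ?_
    filter_upwards [ae_restrict_mem measurableSet_Ioi] with r (hr : 1 < r)
    rw [Real.norm_of_nonneg (by positivity)]
    exact mul_le_of_le_one_left (by positivity) (min_le_right _ _)

namespace Complex

lemma norm_cpow_mul_exp_neg_mul {t : ℝ} (ht : 0 < t) (a z : ℂ) :
    ‖(t : ℂ) ^ (a - 1) * exp (-(z * t))‖ = t ^ (a.re - 1) * Real.exp (-z.re * t) := by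
  rw [norm_mul, norm_cpow_eq_rpow_re_of_pos ht, norm_exp]
  simp

lemma integrableOn_cpow_mul_exp_neg_mul_Ioi {a z : ℂ} (ha : 0 < a.re) (hz : 0 < z.re) :
    IntegrableOn (fun t : ℝ => (t : ℂ) ^ (a - 1) * exp (-(z * t))) (Ioi 0) := by
  have hbound := integrableOn_rpow_mul_exp_neg_mul_rpow (p := 1) (by linarith : -1 < a.re - 1)
    one_pos hz
  simp only [Real.rpow_one] at hbound
  refine hbound.mono' (by fun_prop) ?_
  filter_upwards [ae_restrict_mem measurableSet_Ioi] with t ht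
  exact (norm_cpow_mul_exp_neg_mul ht a z).le

lemma differentiableOn_integral_cpow_mul_exp_neg_mul_Ioi {a : ℂ} (ha : 0 < a.re) :
    DifferentiableOn ℂ (fun z : ℂ => ∫ t in Ioi (0 : ℝ), (t : ℂ) ^ (a - 1) * exp (-(z * t)))
      {z | 0 < z.re} := by
  intro z (hz : 0 < z.re)
  have hre : ∀ w ∈ Metric.ball z (z.re / 2), z.re / 2 < w.re := fun w hw => by
    have := (abs_re_le_norm (w - z)).trans_lt (mem_ball_iff_norm.1 hw)
    rw [sub_re, abs_lt] at this
    linarith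
  -- The derivative is written with exponent `(a + 1) - 1` so that it is again of the same shape.
  have hderiv := hasDerivAt_integral_of_dominated_loc_of_deriv_le
    (F := fun w (t : ℝ) => (t : ℂ) ^ (a - 1) * exp (-(w * t)))
    (F' := fun w (t : ℝ) => -((t : ℂ) ^ (a + 1 - 1) * exp (-(w * t))))
    (bound := fun t => t ^ a.re * Real.exp (-(z.re / 2) * t))
    (Metric.ball_mem_nhds z (half_pos hz))
    (eventually_of_mem (Metric.ball_mem_nhds z (half_pos hz)) fun w hw =>
      (integrableOn_cpow_mul_exp_neg_mul_Ioi ha (by linarith [hre w hw])).aestronglyMeasurable)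
    (integrableOn_cpow_mul_exp_neg_mul_Ioi ha hz)
    (integrableOn_cpow_mul_exp_neg_mul_Ioi (a := a + 1) (by simp only [add_re, one_re]; linarith)
      hz).neg.1 ?_ ?_ ?_
  · exact hderiv.2.differentiableAt.differentiableWithinAt
  · filter_upwards [ae_restrict_mem measurableSet_Ioi] with t ht w hw
    rw [norm_neg, norm_cpow_mul_exp_neg_mul ht, add_re, one_re, add_sub_cancel_right]
    exact mul_le_mul_of_nonneg_left (Real.exp_le_exp.2 (by nlinarith [hre w hw, ht.out]))
      (Real.rpow_nonneg ht.out.le _)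
  · show IntegrableOn _ (Ioi (0 : ℝ))
    simpa [Real.rpow_one] using integrableOn_rpow_mul_exp_neg_mul_rpow (p := 1)
      (by linarith : -1 < a.re) one_pos (half_pos hz)
  · filter_upwards [ae_restrict_mem measurableSet_Ioi] with t (ht : 0 < t) w _
    have ht0 : (t : ℂ) ≠ 0 := ofReal_ne_zero.2 ht.ne'
    have hpow : (t : ℂ) ^ (a + 1 - 1) = (t : ℂ) ^ (a - 1) * t := by
      rw [add_sub_cancel_right, cpow_sub _ _ ht0, cpow_one, div_mul_cancel₀ _ ht0]
    have := ((((hasDerivAt_id w).mul_const (t : ℂ)).neg).cexp).const_mul ((t : ℂ) ^ (a - 1))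
    refine this.congr_deriv ?_
    rw [hpow]
    simp only [id_eq, Pi.neg_apply, one_mul, mul_neg, neg_inj]
    ring

theorem integral_cpow_mul_exp_neg_mul_Ioi_of_re_pos {a z : ℂ} (ha : 0 < a.re) (hz : 0 < z.re) :
    ∫ t in Ioi (0 : ℝ), (t : ℂ) ^ (a - 1) * exp (-(z * t)) = (1 / z) ^ a * Gamma a := by
  have hU : IsOpen {w : ℂ | 0 < w.re} := isOpen_lt continuous_const continuous_re
  have hrhs : DifferentiableOn ℂ (fun w : ℂ => (1 / w) ^ a * Gamma a) {w | 0 < w.re} :=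
    fun w (hw : 0 < w.re) => by
      have hinv : 1 / w ∈ slitPlane := by
        rw [one_div, mem_slitPlane_iff, inv_re]
        exact Or.inl (div_pos hw (normSq_pos.2 fun h => by simp [h] at hw))
      exact ((differentiableAt_const 1).div differentiableAt_id
        (fun h => by simp [h] at hw)).cpow_const hinv |>.mul_const _ |>.differentiableWithinAt
  have hreal : ∃ᶠ w in 𝓝[≠] (1 : ℂ),
      ∫ t in Ioi (0 : ℝ), (t : ℂ) ^ (a - 1) * exp (-(w * t)) = (1 / w) ^ a * Gamma a := by
    have hofReal : Tendsto ((↑) : ℝ → ℂ) (𝓝[≠] 1) (𝓝[≠] 1) :=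
      tendsto_nhdsWithin_of_tendsto_nhds_of_eventually_within _
        (continuous_ofReal.tendsto' 1 1 ofReal_one |>.mono_left nhdsWithin_le_nhds)
        (eventually_nhdsWithin_of_forall fun x hx => by simpa using hx)
    refine hofReal.frequently (Eventually.frequently ?_)
    filter_upwards [nhdsWithin_le_nhds (eventually_gt_nhds one_pos)] with x hx
    exact integral_cpow_mul_exp_neg_mul_Ioi ha hx
  exact ((differentiableOn_integral_cpow_mul_exp_neg_mul_Ioi ha).analyticOnNhd hU)
    |>.eqOn_of_preconnected_of_frequently_eq (hrhs.analyticOnNhd hU)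
      (convex_halfSpace_re_gt 0).isPreconnected (by simp) hreal hz

lemma norm_one_sub_exp_neg_le {u : ℂ} (hu : 0 ≤ u.re) : ‖1 - exp (-u)‖ ≤ 2 * min ‖u‖ 1 := by
  rcases le_total ‖u‖ 1 with h | h
  · rw [min_eq_left h, norm_sub_rev]
    simpa using norm_exp_sub_one_le (x := -u) (by simpa using h)
  · rw [min_eq_right h]
    calc ‖1 - exp (-u)‖ ≤ ‖(1 : ℂ)‖ + ‖exp (-u)‖ := norm_sub_le _ _
      _ ≤ 2 * 1 := by
        rw [norm_one, norm_exp, neg_re]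
        linarith [Real.exp_le_one_iff.2 (neg_nonpos.2 hu)]

variable {β : ℝ}

lemma norm_one_sub_exp_mul_rpow_le {w : ℂ} (hw : 0 ≤ w.re) {r : ℝ} (hr : 0 < r) (s : ℝ) :
    ‖(1 - exp (-(w * r))) * ((r ^ s : ℝ) : ℂ)‖ ≤ 2 * (min (‖w‖ * r) 1 * r ^ s) := by
  have hwr := norm_one_sub_exp_neg_le (u := w * r) (by simpa using mul_nonneg hw hr.le)
  rw [norm_mul, norm_real, Real.norm_of_nonneg (by positivity), ← mul_assoc]
  rw [norm_mul, norm_real, Real.norm_of_nonneg hr.le] at hwr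
  gcongr

lemma integrableOn_one_sub_exp_mul_rpow (hβ0 : 0 < β) (hβ1 : β < 1) {w : ℂ} (hw : 0 ≤ w.re) :
    IntegrableOn (fun r : ℝ => (1 - exp (-(w * r))) * ((r ^ (-(1 + β)) : ℝ) : ℂ)) (Ioi 0) := by
  refine ((integrableOn_min_mul_rpow_Ioi (norm_nonneg w) hβ0 hβ1).const_mul 2).mono'
    (by fun_prop) ?_
  filter_upwards [ae_restrict_mem measurableSet_Ioi] with r hr
  exact norm_one_sub_exp_mul_rpow_le hw hr _

lemma continuousOn_integral_one_sub_exp_mul_rpow (hβ0 : 0 < β) (hβ1 : β < 1) :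
    ContinuousOn
      (fun w : ℂ => ∫ r in Ioi (0 : ℝ), (1 - exp (-(w * r))) * ((r ^ (-(1 + β)) : ℝ) : ℂ))
      {w | 0 ≤ w.re} := by
  intro z _
  refine continuousWithinAt_of_dominated
    (bound := fun r => 2 * (min ((‖z‖ + 1) * r) 1 * r ^ (-(1 + β))))
    (eventually_nhdsWithin_of_forall fun w hw =>
      (integrableOn_one_sub_exp_mul_rpow hβ0 hβ1 hw).aestronglyMeasurable) ?_
    ((integrableOn_min_mul_rpow_Ioi (by positivity) hβ0 hβ1).const_mul 2) ?_
  · have hnear : ∀ᶠ w in 𝓝[{w | 0 ≤ w.re}] z, w ∈ {w : ℂ | 0 ≤ w.re} ∧ ‖w‖ < ‖z‖ + 1 :=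
      (eventually_mem_nhdsWithin (s := {w : ℂ | 0 ≤ w.re})).and (nhdsWithin_le_nhds
        (continuous_norm.continuousAt.eventually (eventually_lt_nhds (lt_add_one ‖z‖))))
    filter_upwards [hnear] with w ⟨hw, hwz⟩
    filter_upwards [ae_restrict_mem measurableSet_Ioi] with r (hr : 0 < r)
    refine (norm_one_sub_exp_mul_rpow_le hw hr _).trans ?_
    gcongr
  · exact ae_of_all _ fun r => by fun_prop

lemma tendsto_one_sub_exp_mul_rpow_nhdsGT_zero (hβ1 : β < 1) {z : ℂ} (hz : 0 ≤ z.re) :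
    Tendsto (fun r : ℝ => (1 - exp (-(z * r))) * ((r ^ (-β) : ℝ) : ℂ)) (𝓝[>] 0) (𝓝 0) := by
  refine squeeze_zero_norm' (a := fun r => 2 * ‖z‖ * r ^ (1 - β)) ?_ ?_
  · filter_upwards [self_mem_nhdsWithin] with r (hr : 0 < r)
    refine (norm_one_sub_exp_mul_rpow_le hz hr _).trans ?_
    rw [show 1 - β = 1 + -β by ring, Real.rpow_add hr, Real.rpow_one]
    have := min_le_left (‖z‖ * r) 1
    have := Real.rpow_nonneg hr.le (-β)
    nlinarith
  · have := ((Real.continuousAt_rpow_const 0 (1 - β) (Or.inr (by linarith))).tendsto.const_mul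
      (2 * ‖z‖)).mono_left (nhdsWithin_le_nhds (s := Ioi 0))
    rwa [Real.zero_rpow (by linarith), mul_zero] at this

lemma tendsto_one_sub_exp_mul_rpow_atTop (hβ0 : 0 < β) {z : ℂ} (hz : 0 ≤ z.re) :
    Tendsto (fun r : ℝ => (1 - exp (-(z * r))) * ((r ^ (-β) : ℝ) : ℂ)) atTop (𝓝 0) := by
  refine squeeze_zero_norm' (a := fun r => 2 * r ^ (-β)) ?_ ?_
  · filter_upwards [eventually_gt_atTop 0] with r hr
    refine (norm_one_sub_exp_mul_rpow_le hz hr _).trans ?_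
    have := min_le_right (‖z‖ * r) 1
    have := Real.rpow_nonneg hr.le (-β)
    nlinarith
  · simpa using (tendsto_rpow_neg_atTop hβ0).const_mul 2

lemma mul_integral_one_sub_exp_mul_rpow_eq (hβ0 : 0 < β) (hβ1 : β < 1) {z : ℂ}
    (hz : 0 < z.re) :
    β * ∫ r in Ioi (0 : ℝ), (1 - exp (-(z * r))) * ((r ^ (-(1 + β)) : ℝ) : ℂ) =
      z * ∫ r in Ioi (0 : ℝ), (r : ℂ) ^ (((1 - β : ℝ) : ℂ) - 1) * exp (-(z * r)) := by
  set F : ℝ → ℂ := fun r => (1 - exp (-(z * r))) * ((r ^ (-β) : ℝ) : ℂ)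
  have hderiv : ∀ r ∈ Ioi (0 : ℝ), HasDerivAt F
      (z * ((r : ℂ) ^ (((1 - β : ℝ) : ℂ) - 1) * exp (-(z * r))) -
        β * ((1 - exp (-(z * r))) * ((r ^ (-(1 + β)) : ℝ) : ℂ))) r := by
    intro r (hr : 0 < r)
    have hexp : HasDerivAt (fun r : ℝ => 1 - exp (-(z * r))) (z * exp (-(z * r))) r := by
      have := ((ofRealCLM.hasDerivAt (x := r)).const_mul z).neg.cexp.const_sub 1
      refine this.congr_deriv ?_
      simp only [ofRealCLM_apply, Pi.neg_apply, ofReal_one, mul_one, mul_neg, neg_neg]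
      ring
    refine (hexp.mul (Real.hasDerivAt_rpow_const (p := -β) (Or.inl hr.ne')).ofReal_comp)
      |>.congr_deriv ?_
    rw [show ((1 - β : ℝ) : ℂ) - 1 = ((-β : ℝ) : ℂ) by push_cast; ring, ofReal_cpow hr.le,
      show -β - 1 = -(1 + β) by ring]
    push_cast
    ring
  have hlaplace := (integrableOn_cpow_mul_exp_neg_mul_Ioi (a := ((1 - β : ℝ) : ℂ))
    (by simpa using hβ1) hz).const_mul z
  have hlevy := (integrableOn_one_sub_exp_mul_rpow hβ0 hβ1 hz.le).const_mul (β : ℂ)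
  have hFTC := integral_Ioi_of_hasDerivAt_of_tendsto
    (continuousWithinAt_Ioi_iff_Ici.1 (by
      simpa [ContinuousWithinAt, F] using tendsto_one_sub_exp_mul_rpow_nhdsGT_zero hβ1 hz.le))
    hderiv (hlaplace.sub hlevy) (tendsto_one_sub_exp_mul_rpow_atTop hβ0 hz.le)
  rw [integral_sub hlaplace hlevy, integral_const_mul, integral_const_mul] at hFTC
  simp only [F, ofReal_zero, mul_zero, neg_zero, exp_zero, sub_self, zero_mul] at hFTC
  linear_combination -hFTC

lemma integral_one_sub_exp_mul_rpow_of_re_pos (hβ0 : 0 < β) (hβ1 : β < 1) {z : ℂ}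
    (hz : 0 < z.re) :
    ∫ r in Ioi (0 : ℝ), (1 - exp (-(z * r))) * ((r ^ (-(1 + β)) : ℝ) : ℂ) =
      Real.Gamma (1 - β) / β * z ^ (β : ℂ) := by
  have hz0 : z ≠ 0 := fun h => by simp [h] at hz
  have hpow : z * (1 / z) ^ ((1 - β : ℝ) : ℂ) = z ^ (β : ℂ) := by
    rw [one_div, inv_cpow _ _ (slitPlane_arg_ne_pi (Or.inl hz)), ofReal_sub, ofReal_one,
      cpow_sub _ _ hz0, cpow_one]
    field_simp
  have h := mul_integral_one_sub_exp_mul_rpow_eq hβ0 hβ1 hz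
  rw [integral_cpow_mul_exp_neg_mul_Ioi_of_re_pos (by simpa using hβ1) hz, Gamma_ofReal,
    ← mul_assoc, hpow] at h
  rw [div_mul_eq_mul_div, eq_div_iff (ofReal_ne_zero.2 hβ0.ne'), mul_comm, h, mul_comm]

end Complex

theorem stmt6 (β : ℝ) (hβ0 : 0 < β) (hβ1 : β < 1) (z : ℂ) (hz : 0 ≤ z.re) :
    z ^ (β : ℂ) = ((β : ℂ) / (Real.Gamma (1 - β) : ℂ)) *
      ∫ r in Ioi (0 : ℝ),
        (1 - Complex.exp (-(z * (r : ℂ)))) * ((r ^ (-(1 + β)) : ℝ) : ℂ) := by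
  have hβ : (β : ℂ) ≠ 0 := Complex.ofReal_ne_zero.2 hβ0.ne'
  have hΓ : (Real.Gamma (1 - β) : ℂ) ≠ 0 :=
    Complex.ofReal_ne_zero.2 (Real.Gamma_pos_of_pos (by linarith)).ne'
  refine EqOn.of_subset_closure (f := fun w : ℂ => w ^ (β : ℂ)) (s := {w | 0 < w.re})
    (fun w hw => ?_) (fun w hw => ?_)
    (continuousOn_const.mul (Complex.continuousOn_integral_one_sub_exp_mul_rpow hβ0 hβ1))
    (fun w (hw : 0 < w.re) => hw.le) (by simp) hz
  · rw [Pi.mul_apply, Complex.integral_one_sub_exp_mul_rpow_of_re_pos hβ0 hβ1 hw]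
    field_simp
  · exact (Complex.continuousAt_cpow_const_of_re_pos (Or.inl hw)
      (by simpa using hβ0)).continuousWithinAt
end

section
/- For every β ∈ (0,1] and all complex numbers z₁, z₂ with Re z₁ ≥ 0 and Re z₂ ≥ 0, one has |z₁^{1+β} - z₂^{1+β}| ≤ (1+β)(|z₁|^β + |z₂|^β)|z₁ - z₂|. -/
/-! The derivative of `w ↦ w ^ r` (`r > 1`) is `r w ^ (r - 1)`, also at `w = 0`, where the function
vanishes to order `r`. The closed right half-plane is convex and lies in the slit plane together
with `0`, so the mean value inequality along the segment from `z₂` to `z₁` gives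
`‖z₁ ^ r - z₂ ^ r‖ ≤ r max(‖z₁‖, ‖z₂‖) ^ (r - 1) ‖z₁ - z₂‖`; take `r = 1 + β`. -/

open Set Filter Asymptotics Topology

namespace Complex

lemma mem_slitPlane_of_re_nonneg {z : ℂ} (hz : 0 ≤ z.re) (h0 : z ≠ 0) : z ∈ slitPlane := by
  rcases hz.lt_or_eq with h | h
  · exact Or.inl h
  · exact Or.inr fun him => h0 (ext h.symm him)

lemma hasDerivAt_cpow_ofReal_zero {r : ℝ} (hr : 1 < r) :
    HasDerivAt (fun w : ℂ => w ^ (r : ℂ)) 0 0 := by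
  have hr0 : (r : ℂ) ≠ 0 := ofReal_ne_zero.2 (by linarith)
  have hsplit : (fun w : ℂ => w ^ (r : ℂ)) = fun w => w ^ ((r : ℂ) - 1) * w := by
    funext w
    rcases eq_or_ne w 0 with rfl | hw
    · simp [zero_cpow hr0]
    · rw [cpow_sub _ _ hw, cpow_one, div_mul_cancel₀ _ hw]
  have hlim : Tendsto (fun w : ℂ => w ^ ((r : ℂ) - 1)) (𝓝 0) (𝓝 0) := by
    have hr1 : (r : ℂ) - 1 ≠ 0 := sub_ne_zero.2 (by exact_mod_cast hr.ne')
    simpa [zero_cpow hr1] using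
      (continuousAt_cpow_const_of_re_pos (z := 0) (w := (r : ℂ) - 1) (Or.inl le_rfl)
        (by simpa using hr)).tendsto
  rw [hasDerivAt_iff_isLittleO_nhds_zero]
  simpa [hsplit, zero_cpow hr0] using
    (isLittleO_one_iff ℂ |>.2 hlim).mul_isBigO (isBigO_refl (fun w : ℂ => w) (𝓝 0))

lemma hasDerivAt_cpow_ofReal_of_re_nonneg {r : ℝ} (hr : 1 < r) {z : ℂ} (hz : 0 ≤ z.re) :
    HasDerivAt (fun w : ℂ => w ^ (r : ℂ)) (r * z ^ ((r : ℂ) - 1)) z := by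
  rcases eq_or_ne z 0 with rfl | h0
  · rw [zero_cpow (sub_ne_zero.2 (by exact_mod_cast hr.ne')), mul_zero]
    exact hasDerivAt_cpow_ofReal_zero hr
  · exact (hasStrictDerivAt_cpow_const (mem_slitPlane_of_re_nonneg hz h0)).hasDerivAt

theorem norm_cpow_sub_cpow_le {r : ℝ} (hr : 1 < r) {z₁ z₂ : ℂ} (h₁ : 0 ≤ z₁.re)
    (h₂ : 0 ≤ z₂.re) :
    ‖z₁ ^ (r : ℂ) - z₂ ^ (r : ℂ)‖ ≤ r * max ‖z₁‖ ‖z₂‖ ^ (r - 1) * ‖z₁ - z₂‖ := by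
  have hre : segment ℝ z₂ z₁ ⊆ {z | 0 ≤ z.re} := (convex_halfSpace_re_ge 0).segment_subset h₂ h₁
  have hball : segment ℝ z₂ z₁ ⊆ Metric.closedBall 0 (max ‖z₁‖ ‖z₂‖) :=
    (convex_closedBall _ _).segment_subset (by simp) (by simp)
  refine (convex_segment z₂ z₁).norm_image_sub_le_of_norm_hasDerivWithin_le
    (fun z hz => (hasDerivAt_cpow_ofReal_of_re_nonneg hr (hre hz)).hasDerivWithinAt)
    (fun z hz => ?_) (left_mem_segment ℝ z₂ z₁) (right_mem_segment ℝ z₂ z₁)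
  have hexp : (r : ℂ) - 1 = ((r - 1 : ℝ) : ℂ) := by push_cast; ring
  rw [norm_mul, hexp, norm_cpow_real, norm_real, Real.norm_of_nonneg (by linarith)]
  gcongr
  simpa using hball hz

end Complex

theorem stmt7_general (β : ℝ) (hβ0 : 0 < β) (z₁ z₂ : ℂ)
    (h₁ : 0 ≤ z₁.re) (h₂ : 0 ≤ z₂.re) :
    ‖z₁ ^ ((1 + β : ℝ) : ℂ) - z₂ ^ ((1 + β : ℝ) : ℂ)‖
      ≤ (1 + β) * (‖z₁‖ ^ β + ‖z₂‖ ^ β) * ‖z₁ - z₂‖ := by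
  have hmax : max ‖z₁‖ ‖z₂‖ ^ β ≤ ‖z₁‖ ^ β + ‖z₂‖ ^ β := by
    rcases max_choice ‖z₁‖ ‖z₂‖ with h | h <;> rw [h] <;>
      linarith [Real.rpow_nonneg (norm_nonneg z₁) β, Real.rpow_nonneg (norm_nonneg z₂) β]
  calc _ ≤ (1 + β) * max ‖z₁‖ ‖z₂‖ ^ (1 + β - 1) * ‖z₁ - z₂‖ :=
        Complex.norm_cpow_sub_cpow_le (by linarith) h₁ h₂
    _ ≤ _ := by rw [add_sub_cancel_left]; gcongr

theorem stmt7 (β : ℝ) (hβ0 : 0 < β) (hβ1 : β ≤ 1) (z₁ z₂ : ℂ)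
    (h₁ : 0 ≤ z₁.re) (h₂ : 0 ≤ z₂.re) :
    ‖z₁ ^ ((1 + β : ℝ) : ℂ) - z₂ ^ ((1 + β : ℝ) : ℂ)‖
      ≤ (1 + β) * (‖z₁‖ ^ β + ‖z₂‖ ^ β) * ‖z₁ - z₂‖ :=
  stmt7_general β hβ0 z₁ z₂ h₁ h₂
end

section
/- With ψ₀ and the hypotheses of the stable-tail comparison (condition (A2): |π̄(r) - A₁ r^{-(1+β)}| ≤ c r^{-(1+β+δ)} for large r, with 0 < β < β+δ < 1), for every η ∈ (0, β] there is a constant C > 0 such that |ψ₀(z)| ≤ C(|z|² + |z|^{1+η}) for all complex z with Re z ≥ 0. -/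
/-!
For `Re w ≥ 0` one has `‖1 - exp (-w)‖ ≤ min ‖w‖ 2`. Split the integral in `ψ₀` at `r = 1`.
Near zero, `∫₀¹ r π̄(r) dr ≤ ∫ min(y, y²) π(dy)` by the layer-cake formula, giving a term of
order `|z|`. Beyond `1`, monotonicity of `π̄` and the tail estimate give `π̄(r) ≤ K r^{-(1+β)}`,
and `∫₀^∞ min(sr, 2) r^{-(1+β)} dr ≤ (1/(1-β) + 2/β) s^β` (split at `r = 1/s`). Hence
`‖ψ₀ z‖ ≲ |z|² + |z|^{1+β}`, and `|z|^{1+β} ≤ |z|² + |z|^{1+η}` for `η ≤ β`.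
-/

open MeasureTheory Set

namespace Complex

lemma norm_one_sub_exp_neg_le_s10 {w : ℂ} (hw : 0 ≤ w.re) : ‖1 - exp (-w)‖ ≤ ‖w‖ := by
  have hderiv : ∀ t ∈ Icc (0 : ℝ) 1, HasDerivWithinAt (fun t : ℝ => exp (-(t * w)))
      (exp (-(t * w)) * -w) (Icc 0 1) t := fun t _ =>
    ((((hasDerivAt_mul_const w).comp_ofReal).neg).cexp).hasDerivWithinAt
  have hbound : ∀ t ∈ Icc (0 : ℝ) 1, ‖exp (-(t * w)) * -w‖ ≤ ‖w‖ := by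
    intro t ht
    have hre : (-(t * w)).re ≤ 0 := by simpa using mul_nonneg ht.1 hw
    rw [norm_mul, norm_neg, norm_exp]
    exact mul_le_of_le_one_left (norm_nonneg w) (Real.exp_le_one_iff.2 hre)
  have := (convex_Icc (0 : ℝ) 1).norm_image_sub_le_of_norm_hasDerivWithin_le hderiv hbound
    (left_mem_Icc.2 zero_le_one) (right_mem_Icc.2 zero_le_one)
  simpa [norm_sub_rev] using this

lemma norm_one_sub_exp_neg_le_two {w : ℂ} (hw : 0 ≤ w.re) : ‖1 - exp (-w)‖ ≤ 2 :=
  calc ‖1 - exp (-w)‖ ≤ ‖(1 : ℂ)‖ + ‖exp (-w)‖ := norm_sub_le _ _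
    _ ≤ 1 + 1 := by
      rw [norm_one, norm_exp, neg_re]
      gcongr
      exact Real.exp_le_one_iff.2 (neg_nonpos.2 hw)
    _ = 2 := one_add_one_eq_two

end Complex

lemma Real.rpow_le_rpow_add_rpow {x p q r : ℝ} (hx : 0 ≤ x) (hp : 0 ≤ p) (hpq : p ≤ q)
    (hqr : q ≤ r) : x ^ q ≤ x ^ p + x ^ r := by
  rcases le_total x 1 with h | h
  · linarith [rpow_le_rpow_of_exponent_ge' hx h hp hpq, rpow_nonneg hx r]
  · linarith [rpow_le_rpow_of_exponent_le h hqr, rpow_nonneg hx p]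

lemma exists_le_mul_rpow_neg_of_antitoneOn {f : ℝ → ℝ} {M K p : ℝ}
    (hf : AntitoneOn f (Ici 1)) (hM : 1 ≤ M) (hp : 0 ≤ p)
    (h : ∀ r, M ≤ r → f r ≤ K * r ^ (-p)) :
    ∃ K', 0 ≤ K' ∧ ∀ r, 1 ≤ r → f r ≤ K' * r ^ (-p) := by
  refine ⟨max K (|f 1| * M ^ p), by positivity, fun r hr => ?_⟩
  have hr0 : 0 < r := by linarith
  have hrp : 0 ≤ r ^ (-p) := Real.rpow_nonneg hr0.le _
  rcases le_total M r with hMr | hrM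
  · exact (h r hMr).trans (by gcongr; exact le_max_left _ _)
  · have hscale : 1 ≤ M ^ p * r ^ (-p) := by
      rw [Real.rpow_neg hr0.le, ← div_eq_mul_inv, one_le_div (by positivity)]
      exact Real.rpow_le_rpow hr0.le hrM hp
    calc f r ≤ f 1 := hf (mem_Ici.2 le_rfl) (mem_Ici.2 hr) hr
      _ ≤ |f 1| * (M ^ p * r ^ (-p)) :=
          (le_abs_self _).trans (le_mul_of_one_le_right (abs_nonneg _) hscale)
      _ = |f 1| * M ^ p * r ^ (-p) := by ring
      _ ≤ max K (|f 1| * M ^ p) * r ^ (-p) := by gcongr; exact le_max_right _ _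

lemma lintegral_Ioi_min_mul_rpow_le {s β : ℝ} (hs : 0 ≤ s) (hβ : 0 < β) (hβ1 : β < 1) :
    ∫⁻ r in Ioi (0 : ℝ), ENNReal.ofReal (min (s * r) 2 * r ^ (-(1 + β))) ≤
      ENNReal.ofReal ((1 / (1 - β) + 2 / β) * s ^ β) := by
  rcases hs.eq_or_lt with rfl | hs
  · simp
  set T := s⁻¹
  have hT : 0 < T := inv_pos.2 hs
  have hsT : s * T ^ (1 - β) = s ^ β := by
    rw [Real.inv_rpow hs.le, ← Real.rpow_neg hs.le, ← Real.rpow_one_add' hs.le (by linarith)]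
    ring_nf
  have hT_neg : T ^ (-β) = s ^ β := by rw [Real.inv_rpow hs.le, Real.rpow_neg hs.le, inv_inv]
  have hnear : ∫⁻ r in Ioc 0 T, ENNReal.ofReal (min (s * r) 2 * r ^ (-(1 + β))) ≤
      ENNReal.ofReal (s ^ β / (1 - β)) :=
    calc ∫⁻ r in Ioc 0 T, ENNReal.ofReal (min (s * r) 2 * r ^ (-(1 + β)))
        ≤ ∫⁻ r in Ioc 0 T, ENNReal.ofReal (s * r ^ (-β)) :=
          setLIntegral_mono' measurableSet_Ioc fun r hr => by
            apply ENNReal.ofReal_le_ofReal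
            calc min (s * r) 2 * r ^ (-(1 + β)) ≤ s * r * r ^ (-(1 + β)) := by
                  gcongr
                  · exact Real.rpow_nonneg hr.1.le _
                  · exact min_le_left _ _
              _ = s * r ^ (-β) := by
                  rw [mul_assoc, ← Real.rpow_one_add' hr.1.le (by linarith)]
                  ring_nf
      _ = ENNReal.ofReal (∫ r in Ioc 0 T, s * r ^ (-β)) := by
          refine (ofReal_integral_eq_lintegral_ofReal ?_ ?_).symm
          · exact ((intervalIntegral.intervalIntegrable_rpow' (by linarith)).1).const_mul _
          · filter_upwards [ae_restrict_mem measurableSet_Ioc] with r hr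
            exact mul_nonneg hs.le (Real.rpow_nonneg hr.1.le _)
      _ = ENNReal.ofReal (s ^ β / (1 - β)) := by
          rw [integral_const_mul, ← intervalIntegral.integral_of_le hT.le,
            integral_rpow (Or.inl (by linarith)), Real.zero_rpow (by linarith), ← hsT]
          ring_nf
  have hfar : ∫⁻ r in Ioi T, ENNReal.ofReal (min (s * r) 2 * r ^ (-(1 + β))) ≤
      ENNReal.ofReal (2 * s ^ β / β) :=
    calc ∫⁻ r in Ioi T, ENNReal.ofReal (min (s * r) 2 * r ^ (-(1 + β)))
        ≤ ∫⁻ r in Ioi T, ENNReal.ofReal (2 * r ^ (-(1 + β))) :=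
          setLIntegral_mono' measurableSet_Ioi fun r hr => by
            have : 0 ≤ r ^ (-(1 + β)) := Real.rpow_nonneg (hT.trans hr).le _
            gcongr
            exact min_le_right _ _
      _ = ENNReal.ofReal (∫ r in Ioi T, 2 * r ^ (-(1 + β))) := by
          refine (ofReal_integral_eq_lintegral_ofReal ?_ ?_).symm
          · exact (integrableOn_Ioi_rpow_of_lt (by linarith) hT).const_mul _
          · filter_upwards [ae_restrict_mem measurableSet_Ioi] with r hr
            exact mul_nonneg zero_le_two (Real.rpow_nonneg (hT.trans hr).le _)
      _ = ENNReal.ofReal (2 * s ^ β / β) := by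
          rw [integral_const_mul, integral_Ioi_rpow_of_lt (by linarith) hT, ← hT_neg]
          ring_nf
  rw [← Ioc_union_Ioi_eq_Ioi hT.le, lintegral_union measurableSet_Ioi (Ioc_disjoint_Ioi le_rfl)]
  calc _ ≤ ENNReal.ofReal (s ^ β / (1 - β)) + ENNReal.ofReal (2 * s ^ β / β) :=
        add_le_add hnear hfar
    _ = ENNReal.ofReal ((1 / (1 - β) + 2 / β) * s ^ β) := by
      rw [← ENNReal.ofReal_add (by positivity) (by positivity)]
      ring_nf

section Tail

variable (μ : Measure ℝ)

lemma measure_Ioi_lt_top_of_lintegral_min_sq_lt_top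
    (hμ : ∫⁻ y, ENNReal.ofReal (min y (y ^ 2)) ∂μ < ⊤) {a : ℝ} (ha : 0 < a) :
    μ (Ioi a) < ⊤ := by
  have hmarkov : ENNReal.ofReal (min a (a ^ 2)) * μ (Ioi a) ≤
      ∫⁻ y, ENNReal.ofReal (min y (y ^ 2)) ∂μ :=
    calc ENNReal.ofReal (min a (a ^ 2)) * μ (Ioi a)
        = ∫⁻ _ in Ioi a, ENNReal.ofReal (min a (a ^ 2)) ∂μ := (setLIntegral_const _ _).symm
      _ ≤ ∫⁻ y in Ioi a, ENNReal.ofReal (min y (y ^ 2)) ∂μ :=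
          setLIntegral_mono' measurableSet_Ioi fun y hy => by
            have hay : a ≤ y := le_of_lt hy
            gcongr
      _ ≤ ∫⁻ y, ENNReal.ofReal (min y (y ^ 2)) ∂μ := setLIntegral_le_lintegral _ _
  refine ENNReal.lt_top_of_mul_ne_top_right (hmarkov.trans_lt hμ).ne ?_
  simp [ha, ha.ne']

lemma lintegral_Ioc_mul_measure_Ioi_le :
    ∫⁻ r in Ioc 0 1, ENNReal.ofReal r * μ (Ioi r) ≤ ∫⁻ y, ENNReal.ofReal (min y (y ^ 2)) ∂μ := by
  set f : ℝ → ℝ := fun y => max (min y 1) 0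
  have layer := lintegral_comp_eq_lintegral_meas_le_mul_of_measurable μ
    (f := f) (g := fun t => t) (fun y => le_max_right _ _) (by fun_prop)
    (fun _ _ => intervalIntegral.intervalIntegrable_id) measurable_id (fun _ ht => ht.le)
  calc ∫⁻ r in Ioc 0 1, ENNReal.ofReal r * μ (Ioi r)
      ≤ ∫⁻ r in Ioc 0 1, μ {y | r ≤ f y} * ENNReal.ofReal r :=
        setLIntegral_mono' measurableSet_Ioc fun r hr => by
          rw [mul_comm]
          gcongr
          exact fun y hy => le_max_of_le_left (le_min (le_of_lt hy) hr.2)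
    _ ≤ ∫⁻ r in Ioi 0, μ {y | r ≤ f y} * ENNReal.ofReal r :=
        lintegral_mono_set Ioc_subset_Ioi_self
    _ = ∫⁻ y, ENNReal.ofReal (∫ t in 0..f y, t) ∂μ := layer.symm
    _ ≤ ∫⁻ y, ENNReal.ofReal (min y (y ^ 2)) ∂μ := lintegral_mono fun y => by
        rw [ENNReal.ofReal_le_ofReal_iff', integral_id]
        rcases le_total y 0 with hy | hy
        · right
          simp [f, hy]
        · left
          rcases le_total y 1 with hy1 | hy1
          · simp only [f, min_eq_left hy1, max_eq_left hy, min_eq_right (by nlinarith : y ^ 2 ≤ y)]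
            nlinarith
          · simp only [f, min_eq_right hy1, max_eq_left zero_le_one,
              min_eq_left (by nlinarith : y ≤ y ^ 2)]
            linarith

lemma exists_toReal_measure_Ioi_le_mul_rpow_neg
    (hμ : ∫⁻ y, ENNReal.ofReal (min y (y ^ 2)) ∂μ < ⊤) {M K p : ℝ} (hM : 1 ≤ M) (hp : 0 ≤ p)
    (h : ∀ r, M ≤ r → (μ (Ioi r)).toReal ≤ K * r ^ (-p)) :
    ∃ K', 0 ≤ K' ∧ ∀ r, 1 ≤ r → (μ (Ioi r)).toReal ≤ K' * r ^ (-p) := by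
  have hμ1 : μ (Ioi 1) ≠ ⊤ := (measure_Ioi_lt_top_of_lintegral_min_sq_lt_top μ hμ one_pos).ne
  refine exists_le_mul_rpow_neg_of_antitoneOn (fun r hr r' _ hrr' => ?_) hM hp h
  exact ENNReal.toReal_mono (ne_top_of_le_ne_top hμ1 (measure_mono (Ioi_subset_Ioi hr)))
    (measure_mono (Ioi_subset_Ioi hrr'))

lemma norm_integral_one_sub_exp_mul_measure_Ioi_le
    (hμ : ∫⁻ y, ENNReal.ofReal (min y (y ^ 2)) ∂μ < ⊤) {β K : ℝ} (hβ : 0 < β) (hβ1 : β < 1)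
    (hK : 0 ≤ K) (htail : ∀ r, 1 ≤ r → (μ (Ioi r)).toReal ≤ K * r ^ (-(1 + β)))
    {z : ℂ} (hz : 0 ≤ z.re) :
    ‖∫ r in Ioi (0 : ℝ), (1 - Complex.exp (-(z * r))) * ((μ (Ioi r)).toReal : ℂ)‖ ≤
      (∫⁻ y, ENNReal.ofReal (min y (y ^ 2)) ∂μ).toReal * ‖z‖ +
        K * (1 / (1 - β) + 2 / β) * ‖z‖ ^ β := by
  set L := ∫⁻ y, ENNReal.ofReal (min y (y ^ 2)) ∂μ
  set s := ‖z‖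
  have hpoint : ∀ r : ℝ, 0 ≤ r →
      ‖(1 - Complex.exp (-(z * r))) * ((μ (Ioi r)).toReal : ℂ)‖ ≤
        min (s * r) 2 * (μ (Ioi r)).toReal := by
    intro r hr
    have hzr : 0 ≤ (z * r).re := by simpa using mul_nonneg hz hr
    rw [norm_mul, Complex.norm_real, Real.norm_of_nonneg ENNReal.toReal_nonneg]
    gcongr
    refine le_min ((Complex.norm_one_sub_exp_neg_le_s10 hzr).trans_eq ?_)
      (Complex.norm_one_sub_exp_neg_le_two hzr)
    rw [norm_mul, Complex.norm_real, Real.norm_of_nonneg hr]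
  have hnear : ∫⁻ r in Ioc (0 : ℝ) 1,
      ENNReal.ofReal ‖(1 - Complex.exp (-(z * r))) * ((μ (Ioi r)).toReal : ℂ)‖ ≤
        ENNReal.ofReal (L.toReal * s) :=
    calc _ ≤ ∫⁻ r in Ioc 0 1, ENNReal.ofReal s * (ENNReal.ofReal r * μ (Ioi r)) :=
          setLIntegral_mono' measurableSet_Ioc fun r hr => by
            calc _ ≤ ENNReal.ofReal (s * r * (μ (Ioi r)).toReal) := by
                  gcongr
                  exact (hpoint r hr.1.le).trans (by gcongr; exact min_le_left _ _)
              _ ≤ _ := by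
                  rw [ENNReal.ofReal_mul (mul_nonneg (norm_nonneg z) hr.1.le),
                    ENNReal.ofReal_mul (norm_nonneg z), mul_assoc]
                  gcongr
                  exact ENNReal.ofReal_toReal_le
      _ = ENNReal.ofReal s * ∫⁻ r in Ioc 0 1, ENNReal.ofReal r * μ (Ioi r) :=
          lintegral_const_mul' _ _ ENNReal.ofReal_ne_top
      _ ≤ ENNReal.ofReal s * L := by gcongr; exact lintegral_Ioc_mul_measure_Ioi_le μ
      _ = ENNReal.ofReal (L.toReal * s) := by
          rw [mul_comm, ENNReal.ofReal_mul ENNReal.toReal_nonneg, ENNReal.ofReal_toReal hμ.ne]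
  have hfar : ∫⁻ r in Ioi (1 : ℝ),
      ENNReal.ofReal ‖(1 - Complex.exp (-(z * r))) * ((μ (Ioi r)).toReal : ℂ)‖ ≤
        ENNReal.ofReal (K * (1 / (1 - β) + 2 / β) * s ^ β) :=
    calc _ ≤ ∫⁻ r in Ioi 1, ENNReal.ofReal K *
            ENNReal.ofReal (min (s * r) 2 * r ^ (-(1 + β))) :=
          setLIntegral_mono' measurableSet_Ioi fun r (hr : 1 < r) => by
            rw [← ENNReal.ofReal_mul hK]
            gcongr
            calc _ ≤ min (s * r) 2 * (μ (Ioi r)).toReal := hpoint r (by linarith)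
              _ ≤ min (s * r) 2 * (K * r ^ (-(1 + β))) := by
                  have : 0 ≤ min (s * r) 2 := le_min (by positivity) zero_le_two
                  gcongr
                  exact htail r hr.le
              _ = K * (min (s * r) 2 * r ^ (-(1 + β))) := by ring
      _ = ENNReal.ofReal K * ∫⁻ r in Ioi 1, ENNReal.ofReal (min (s * r) 2 * r ^ (-(1 + β))) :=
          lintegral_const_mul' _ _ ENNReal.ofReal_ne_top
      _ ≤ ENNReal.ofReal K * ∫⁻ r in Ioi 0, ENNReal.ofReal (min (s * r) 2 * r ^ (-(1 + β))) := by
          gcongr ENNReal.ofReal K * ?_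
          exact lintegral_mono_set (Ioi_subset_Ioi zero_le_one)
      _ ≤ ENNReal.ofReal K * ENNReal.ofReal ((1 / (1 - β) + 2 / β) * s ^ β) := by
          gcongr
          exact lintegral_Ioi_min_mul_rpow_le (norm_nonneg z) hβ hβ1
      _ = ENNReal.ofReal (K * (1 / (1 - β) + 2 / β) * s ^ β) := by
          rw [← ENNReal.ofReal_mul hK, mul_assoc]
  refine (norm_integral_le_lintegral_norm _).trans (ENNReal.toReal_le_of_le_ofReal
    (by positivity) ?_)
  rw [← Ioc_union_Ioi_eq_Ioi zero_le_one,
    lintegral_union measurableSet_Ioi (Ioc_disjoint_Ioi le_rfl),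
    ENNReal.ofReal_add (by positivity) (by positivity)]
  exact add_le_add hnear hfar

end Tail

theorem stmt10_general (b : ℝ) (π : Measure ℝ)
    (hfin : ∫⁻ y, ENNReal.ofReal (min y (y ^ 2)) ∂π < ⊤)
    (ψ₀ : ℂ → ℂ)
    (hψ₀ : ∀ z : ℂ, 0 ≤ z.re → ψ₀ z = (b : ℂ) * z ^ 2 +
      z * ∫ r in Ioi (0 : ℝ),
        (1 - Complex.exp (-(z * (r : ℂ)))) * ((π (Ioi r)).toReal : ℂ))
    (β δ A₁ c M : ℝ) (hβ : 0 < β) (hδ : 0 < δ) (hβδ : β + δ < 1)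
    (hc : 0 ≤ c) (hM : 1 ≤ M)
    (htail : ∀ r, M ≤ r →
      |(π (Ioi r)).toReal - A₁ * r ^ (-(1 + β))| ≤ c * r ^ (-(1 + β + δ))) :
    ∀ η : ℝ, 0 < η → η ≤ β → ∃ C : ℝ, 0 < C ∧
      ∀ z : ℂ, 0 ≤ z.re → ‖ψ₀ z‖ ≤ C * (‖z‖ ^ 2 + ‖z‖ ^ (1 + η)) := by
  intro η hη hηβ
  have hβ1 : β < 1 := by linarith
  have htail' : ∀ r, M ≤ r → (π (Ioi r)).toReal ≤ (A₁ + c) * r ^ (-(1 + β)) := fun r hr => by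
    have hδr : r ^ (-(1 + β + δ)) ≤ r ^ (-(1 + β)) :=
      Real.rpow_le_rpow_of_exponent_le (hM.trans hr) (by linarith)
    nlinarith [(abs_le.1 (htail r hr)).2]
  obtain ⟨K, hK, hKtail⟩ :=
    exists_toReal_measure_Ioi_le_mul_rpow_neg π hfin hM (by positivity) htail'
  set L := (∫⁻ y, ENNReal.ofReal (min y (y ^ 2)) ∂π).toReal
  set D := K * (1 / (1 - β) + 2 / β)
  have hD : 0 ≤ D := by positivity
  refine ⟨|b| + L + D + 1, by positivity, fun z hz => ?_⟩
  have hintegral := norm_integral_one_sub_exp_mul_measure_Ioi_le π hfin hβ hβ1 hK hKtail hz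
  have hinterp : ‖z‖ ^ (1 + β) ≤ ‖z‖ ^ 2 + ‖z‖ ^ (1 + η) := by
    refine (Real.rpow_le_rpow_add_rpow (norm_nonneg z) (by linarith : 0 ≤ 1 + η)
      (by linarith : 1 + η ≤ 1 + β) (by linarith : 1 + β ≤ 2)).trans_eq ?_
    rw [Real.rpow_two, add_comm]
  have hsplit : ‖z‖ ^ (1 + β) = ‖z‖ * ‖z‖ ^ β := by
    rw [Real.rpow_add' (norm_nonneg z) (by linarith), Real.rpow_one]
  calc ‖ψ₀ z‖ ≤ |b| * ‖z‖ ^ 2 + ‖z‖ * (L * ‖z‖ + D * ‖z‖ ^ β) := by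
        rw [hψ₀ z hz]
        refine (norm_add_le _ _).trans ?_
        rw [norm_mul, norm_mul, norm_pow, Complex.norm_real, Real.norm_eq_abs]
        gcongr
    _ = (|b| + L) * ‖z‖ ^ 2 + D * ‖z‖ ^ (1 + β) := by rw [hsplit]; ring
    _ ≤ (|b| + L + D + 1) * (‖z‖ ^ 2 + ‖z‖ ^ (1 + η)) := by
        have hbL : 0 ≤ (|b| + L) * ‖z‖ ^ (1 + η) := by positivity
        linarith [mul_le_mul_of_nonneg_left hinterp hD, sq_nonneg ‖z‖,
          Real.rpow_nonneg (norm_nonneg z) (1 + η)]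

theorem stmt10 (b : ℝ) (hb : 0 ≤ b) (π : Measure ℝ) (hsupp : π (Iic 0) = 0)
    (hfin : ∫⁻ y, ENNReal.ofReal (min y (y ^ 2)) ∂π < ⊤)
    (ψ₀ : ℂ → ℂ)
    (hψ₀ : ∀ z : ℂ, 0 ≤ z.re → ψ₀ z = (b : ℂ) * z ^ 2 +
      z * ∫ r in Ioi (0 : ℝ),
        (1 - Complex.exp (-(z * (r : ℂ)))) * ((π (Ioi r)).toReal : ℂ))
    (β δ A₁ c M : ℝ) (hβ : 0 < β) (hδ : 0 < δ) (hβδ : β + δ < 1)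
    (hA₁ : 0 < A₁) (hc : 0 ≤ c) (hM : 1 ≤ M)
    (htail : ∀ r, M ≤ r →
      |(π (Ioi r)).toReal - A₁ * r ^ (-(1 + β))| ≤ c * r ^ (-(1 + β + δ))) :
    ∀ η : ℝ, 0 < η → η ≤ β → ∃ C : ℝ, 0 < C ∧
      ∀ z : ℂ, 0 ≤ z.re → ‖ψ₀ z‖ ≤ C * (‖z‖ ^ 2 + ‖z‖ ^ (1 + η)) :=
  stmt10_general b π hfin ψ₀ hψ₀ β δ A₁ c M hβ hδ hβδ hc hM htail
end
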